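/- arXiv:1410.4209 — 4 statements merged into one kernel-verified Lean document; each statement's English description precedes it below -/
import Mathlib

section
/- For the path graph P_n with n ≥ 2: md_2^AP(P_n) = 2, and for every integer k with 3 ≤ k ≤ n − 1, md_k^AP(P_n) = k + 1. -/
open SimpleGraph

lemma path_walk_le {n : ℕ} {u v : Fin n} (w : (pathGraph n).Walk u v) :
    ((u : ℤ) - (v : ℤ)).natAbs ≤ w.length := by
  induction w with
  | nil => simp
  | @cons a b c h p ih =>
    rw [pathGraph_adj] at h
    rw [Walk.length_cons]
    omega

lemma path_exists_walk {n : ℕ} (d : ℕ) : ∀ (u v : Fin n), v.val = u.val + d →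
    ∃ w : (pathGraph n).Walk u v, w.length = d := by
  induction d with
  | zero =>
    intro u v h
    have : u = v := Fin.ext (by omega)
    subst this; exact ⟨Walk.nil, rfl⟩
  | succ d ih =>
    intro u v h
    have hu1 : u.val + 1 < n := by omega
    have hadj : (pathGraph n).Adj u ⟨u.val + 1, hu1⟩ := pathGraph_adj.mpr (Or.inl rfl)
    obtain ⟨w, hw⟩ := ih ⟨u.val + 1, hu1⟩ v (by simp; omega)
    exact ⟨Walk.cons hadj w, by simp [hw]⟩

lemma path_dist {n : ℕ} (u v : Fin n) :
    (pathGraph n).dist u v = ((u : ℤ) - (v : ℤ)).natAbs := by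
  apply le_antisymm
  · rcases le_total u.val v.val with h | h
    · obtain ⟨w, hw⟩ := path_exists_walk (v.val - u.val) u v (by omega)
      calc (pathGraph n).dist u v ≤ w.length := dist_le w
        _ = _ := by rw [hw]; omega
    · obtain ⟨w, hw⟩ := path_exists_walk (u.val - v.val) v u (by omega)
      calc (pathGraph n).dist u v = (pathGraph n).dist v u := dist_comm
        _ ≤ w.length := dist_le w
        _ = _ := by rw [hw]; omega
  · obtain ⟨w, hw⟩ := (pathGraph_preconnected n u v).exists_walk_length_eq_dist
    rw [← hw]; exact path_walk_le w

def isAPLandmark {V : Type*} (G : SimpleGraph V) (k : ℕ) (L : Finset V) : Prop :=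
  ∀ u v : V, u ≠ v → k ≤ (L.filter fun τ => G.dist u τ ≠ G.dist v τ).card

/-- For the path graph on `n ≥ 2` vertices, the minimum cardinality of an AP
`2`-landmark set is `2`, and for every `3 ≤ k ≤ n - 1` the minimum cardinality of an
AP `k`-landmark set is `k + 1`. -/
theorem stmt_3 (n : ℕ) (hn : 2 ≤ n) :
    IsLeast {m | ∃ L : Finset (Fin n),
      isAPLandmark (SimpleGraph.pathGraph n) 2 L ∧ L.card = m} 2 ∧
    ∀ k : ℕ, 3 ≤ k → k ≤ n - 1 →
      IsLeast {m | ∃ L : Finset (Fin n),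
        isAPLandmark (SimpleGraph.pathGraph n) k L ∧ L.card = m} (k + 1) := by
  have key : ∀ (u v : Fin n), u ≠ v → ∀ L : Finset (Fin n),
      L.card - 1 ≤ (L.filter fun τ => (pathGraph n).dist u τ ≠ (pathGraph n).dist v τ).card := by
    intro u v huv L
    have h1 : (L.filter fun τ => ¬ ((pathGraph n).dist u τ ≠ (pathGraph n).dist v τ)).card ≤ 1 := by
      rw [Finset.card_le_one]
      intro a ha b hb
      simp only [Finset.mem_filter, not_not] at ha hb
      have ha' := ha.2; have hb' := hb.2
      rw [path_dist, path_dist] at ha' hb'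
      have : u.val ≠ v.val := fun h => huv (Fin.ext h)
      exact Fin.ext (by omega)
    have := Finset.card_filter_add_card_filter_not
      (s := L) (p := fun τ => (pathGraph n).dist u τ ≠ (pathGraph n).dist v τ)
    omega
  have lb : ∀ k, 1 ≤ k → ∀ m ∈ {m | ∃ L : Finset (Fin n),
      isAPLandmark (SimpleGraph.pathGraph n) k L ∧ L.card = m}, k ≤ m := by
    rintro k hk m ⟨L, hL, rfl⟩
    have h01 : (⟨0, by omega⟩ : Fin n) ≠ ⟨1, by omega⟩ := by
      intro h; exact absurd (congrArg Fin.val h) (by simp)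
    calc k ≤ _ := hL ⟨0, by omega⟩ ⟨1, by omega⟩ h01
      _ ≤ L.card := Finset.card_filter_le _ _
  constructor
  · constructor
    · have hcard2 : ({⟨0, by omega⟩, ⟨n-1, by omega⟩} : Finset (Fin n)).card = 2 := by
        rw [Finset.card_insert_of_notMem, Finset.card_singleton]
        simp only [Finset.mem_singleton]
        intro h
        exact absurd (congrArg Fin.val h) (by simp; omega)
      refine ⟨{⟨0, by omega⟩, ⟨n-1, by omega⟩}, ?_, hcard2⟩
      intro u v huv
      have hsep : ∀ τ ∈ ({⟨0, by omega⟩, ⟨n-1, by omega⟩} : Finset (Fin n)),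
          (pathGraph n).dist u τ ≠ (pathGraph n).dist v τ := by
        intro τ hτ
        have huv' : u.val ≠ v.val := fun h => huv (Fin.ext h)
        have hu : u.val < n := u.isLt
        have hv : v.val < n := v.isLt
        simp only [Finset.mem_insert, Finset.mem_singleton] at hτ
        rw [path_dist, path_dist]
        rcases hτ with rfl | rfl <;> simp <;> omega
      rw [Finset.filter_true_of_mem hsep, hcard2]
    · exact lb 2 (by omega)
  · intro k hk3 hkn
    constructor
    · obtain ⟨L, hLsub, hLcard⟩ := Finset.exists_subset_card_eq
        (s := (Finset.univ : Finset (Fin n))) (n := k + 1) (by simp; omega)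
      refine ⟨L, ?_, hLcard⟩
      intro u v huv
      have := key u v huv L
      omega
    · rintro m ⟨L, hL, rfl⟩
      by_contra hcon
      push_neg at hcon
      have hm : k ≤ L.card := lb k (by omega) L.card ⟨L, hL, rfl⟩
      have hcard : L.card = k := by omega
      -- find interior element of L
      have hint : ∃ τ ∈ L, 0 < τ.val ∧ τ.val < n - 1 := by
        by_contra hno
        push_neg at hno
        have hsub2 : L ⊆ {⟨0, by omega⟩, ⟨n-1, by omega⟩} := by
          intro τ hτ
          have hb := hno τ hτ
          simp only [Finset.mem_insert, Finset.mem_singleton]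
          have : τ.val = 0 ∨ τ.val = n - 1 := by omega
          rcases this with h | h
          · left; exact Fin.ext (by simp [h])
          · right; exact Fin.ext (by simp [h])
        have h1 := Finset.card_le_card hsub2
        have h2 : ({⟨0, by omega⟩, ⟨n-1, by omega⟩} : Finset (Fin n)).card ≤ 2 :=
          Finset.card_insert_le _ _ |>.trans (by simp)
        omega
      obtain ⟨τ, hτL, hτ0, hτn⟩ := hint
      set u : Fin n := ⟨τ.val - 1, by omega⟩
      set v : Fin n := ⟨τ.val + 1, by omega⟩
      have huv : u ≠ v := by
        intro h
        have := congrArg Fin.val h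
        simp only [u, v] at this
        omega
      have hfail : (pathGraph n).dist u τ = (pathGraph n).dist v τ := by
        rw [path_dist, path_dist]
        simp only [u, v]
        omega
      have hsub : (L.filter fun σ => (pathGraph n).dist u σ ≠ (pathGraph n).dist v σ) ⊆ L.erase τ := by
        intro σ hσ
        simp only [Finset.mem_filter] at hσ
        rw [Finset.mem_erase]
        refine ⟨fun h => ?_, hσ.1⟩
        subst h; exact hσ.2 hfail
      have := hL u v huv
      have := Finset.card_le_card hsub
      have := Finset.card_erase_le (a := τ) (s := L)
      have herase : (L.erase τ).card = L.card - 1 := Finset.card_erase_of_mem hτL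
      omega
end

section
/- Let P_n be the path graph on n vertices, k ≥ 2, n ≥ k + 2, and let L be a set of exactly k vertices of P_n. If L induces at least two gaps and at least one gap contains at least two vertices, then L is not an NL k-landmark set. -/
/-- `L` is an NL `k`-landmark set of `G`: every pair of distinct vertices not in `L` is
separated (i.e. has different distances) by at least `k` vertices of `L`. -/
def isNLLandmark {V : Type*} (G : SimpleGraph V) (k : ℕ) (L : Finset V) : Prop :=
  ∀ u v : V, u ≠ v → u ∉ L → v ∉ L →
    k ≤ (L.filter fun τ => G.dist u τ ≠ G.dist v τ).card

/-- The number of gaps (maximal runs of consecutive vertices not in `L`) induced by `L`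
on the path with vertices `0, …, n-1`, counted via their first vertices. -/
def numGaps {n : ℕ} (L : Finset (Fin n)) : ℕ :=
  (Finset.univ.filter fun i : Fin n => i ∉ L ∧
    (i.val = 0 ∨ (⟨i.val - 1, lt_of_le_of_lt (Nat.sub_le _ _) i.isLt⟩ : Fin n) ∈ L)).card

section Aux

open SimpleGraph

lemma aux_walk_len_ge {n : ℕ} {u v : Fin n} (p : (pathGraph n).Walk u v) :
    Nat.dist u.val v.val ≤ p.length := by
  induction p with
  | nil => simp [Nat.dist_self]
  | @cons a b c h p ih =>
    have hab : Nat.dist a.val b.val = 1 := by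
      rw [pathGraph_adj] at h
      rcases h with h | h <;> simp [Nat.dist, ← h]
    calc Nat.dist a.val c.val ≤ Nat.dist a.val b.val + Nat.dist b.val c.val :=
          Nat.dist.triangle_inequality _ _ _
      _ ≤ 1 + p.length := by rw [hab]; omega
      _ = (SimpleGraph.Walk.cons h p).length := by simp [Nat.add_comm]

lemma aux_pg_conn {n : ℕ} (u : Fin n) : (pathGraph n).Connected :=
  have : Nonempty (Fin n) := ⟨u⟩
  ⟨pathGraph_preconnected n⟩

lemma aux_pg_dist_le {n : ℕ} : ∀ (d : ℕ) (u v : Fin n), Nat.dist u.val v.val = d →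
    (pathGraph n).dist u v ≤ d := by
  intro d
  induction d with
  | zero =>
    intro u v h
    have : u = v := Fin.ext (Nat.eq_of_dist_eq_zero h)
    simp [this]
  | succ d ih =>
    intro u v h
    rcases lt_trichotomy u.val v.val with hlt | heq | hgt
    · have hw : u.val + 1 < n := lt_of_le_of_lt hlt v.isLt
      have hadj : (pathGraph n).Adj u ⟨u.val + 1, hw⟩ := by rw [pathGraph_adj]; left; rfl
      have h2 : (pathGraph n).dist ⟨u.val + 1, hw⟩ v ≤ d := by
        apply ih
        simp only [Nat.dist] at h ⊢
        omega
      calc (pathGraph n).dist u v ≤ _ + _ := (aux_pg_conn u).dist_triangle (v := ⟨u.val + 1, hw⟩)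
        _ ≤ d + 1 := by
            have := dist_eq_one_iff_adj.mpr hadj
            omega
    · simp [Nat.dist, heq] at h
    · have hu0 : 0 < u.val := by omega
      have hw : u.val - 1 < n := lt_of_le_of_lt (Nat.sub_le _ _) u.isLt
      have hadj : (pathGraph n).Adj u ⟨u.val - 1, hw⟩ := by
        rw [pathGraph_adj]; right; simp only [Fin.val_mk]; omega
      have h2 : (pathGraph n).dist ⟨u.val - 1, hw⟩ v ≤ d := by
        apply ih
        simp only [Nat.dist] at h ⊢
        omega
      calc (pathGraph n).dist u v ≤ _ + _ := (aux_pg_conn u).dist_triangle (v := ⟨u.val - 1, hw⟩)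
        _ ≤ d + 1 := by
            have := dist_eq_one_iff_adj.mpr hadj
            omega

lemma aux_pathGraph_dist {n : ℕ} (u v : Fin n) :
    (pathGraph n).dist u v = Nat.dist u.val v.val := by
  refine le_antisymm (aux_pg_dist_le _ u v rfl) ?_
  obtain ⟨p, hp⟩ := (aux_pg_conn u).exists_walk_length_eq_dist u v
  rw [← hp]
  exact aux_walk_len_ge p

/-- If some landmark is at equal distance from two distinct holes, then `L` (of size `k`)
is not an NL `k`-landmark set. -/
lemma aux_kill {n k : ℕ} (L : Finset (Fin n)) (hcard : L.card = k) (hk : 1 ≤ k)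
    (u v τ : ℕ) (hun : u < n) (hvn : v < n) (hτn : τ < n) (huv : u ≠ v)
    (hu : (⟨u, hun⟩ : Fin n) ∉ L) (hv : (⟨v, hvn⟩ : Fin n) ∉ L)
    (hτ : (⟨τ, hτn⟩ : Fin n) ∈ L)
    (hd : Nat.dist u τ = Nat.dist v τ) :
    ¬ isNLLandmark (SimpleGraph.pathGraph n) k L := by
  intro hL
  have h := hL ⟨u, hun⟩ ⟨v, hvn⟩ (Fin.ne_of_val_ne huv) hu hv
  set F := L.filter (fun τ' => (pathGraph n).dist ⟨u, hun⟩ τ' ≠ (pathGraph n).dist ⟨v, hvn⟩ τ')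
    with hF
  have hτnot : (⟨τ, hτn⟩ : Fin n) ∉ F := by
    simp only [hF, Finset.mem_filter, not_and, not_not]
    intro _
    rw [aux_pathGraph_dist, aux_pathGraph_dist]
    exact hd
  have hsub : F ⊆ L.erase ⟨τ, hτn⟩ := by
    intro x hx
    rw [Finset.mem_erase]
    exact ⟨fun hxt => hτnot (hxt ▸ hx), (Finset.mem_filter.mp hx).1⟩
  have h1 := Finset.card_le_card hsub
  have h2 := Finset.card_erase_of_mem hτ
  omega

end Aux

/-- For the path graph on `n` vertices, `k ≥ 2`, `n ≥ k + 2`: if a set `L` of exactly `k`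
vertices induces at least two gaps, at least one of which contains at least two vertices
(i.e. there are two consecutive vertices not in `L`), then `L` is not an NL
`k`-landmark set. -/
theorem stmt_6 (n k : ℕ) (hk : 2 ≤ k) (hn : k + 2 ≤ n)
    (L : Finset (Fin n)) (hcard : L.card = k)
    (hgaps : 2 ≤ numGaps L)
    (hbig : ∃ i : Fin n, ∃ hi : i.val + 1 < n,
      i ∉ L ∧ (⟨i.val + 1, hi⟩ : Fin n) ∉ L) :
    ¬ isNLLandmark (SimpleGraph.pathGraph n) k L := by
  classical
  obtain ⟨i, hi1, hiL, hi2L⟩ := hbig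
  set i0 := i.val with hi0
  -- hole and landmark predicates on naturals
  set H : ℕ → Prop := fun j => ∃ hj : j < n, (⟨j, hj⟩ : Fin n) ∉ L with hHdef
  set M : ℕ → Prop := fun j => ∃ hj : j < n, (⟨j, hj⟩ : Fin n) ∈ L with hMdef
  have hHM : ∀ j (hj : j < n), ¬ H j → (⟨j, hj⟩ : Fin n) ∈ L := by
    intro j hj hnH
    by_contra hc
    exact hnH ⟨hj, hc⟩
  have hMH : ∀ j, M j → ¬ H j := by
    rintro j ⟨hj, hm⟩ ⟨hj', hh⟩
    exact hh hm
  have hHi0 : H i0 := ⟨i.isLt, by simpa using hiL⟩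
  have hHi1 : H (i0 + 1) := ⟨hi1, hi2L⟩
  -- dichotomy: a gap start strictly above i0+1, or a gap end strictly below i0
  have dich : (∃ g, i0 + 1 < g ∧ g < n ∧ H g ∧ M (g - 1)) ∨
      (∃ w, w < i0 ∧ H w ∧ M (w + 1)) := by
    by_contra hcon
    push_neg at hcon
    obtain ⟨hA, hB⟩ := hcon
    -- upward propagation of holes below i0
    have step : ∀ j, j < i0 → H j → H (j + 1) := by
      intro j hj hHj
      have h1n : j + 1 < n := by omega
      have := hB j hj hHj
      refine ⟨h1n, ?_⟩
      by_contra hc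
      exact this ⟨h1n, hc⟩
    have prop : ∀ d j, j + d ≤ i0 → H j → H (j + d) := by
      intro d
      induction d with
      | zero => intro j _ h; simpa using h
      | succ d ih =>
        intro j hd hHj
        have : H (j + d) := ih j (by omega) hHj
        have := step (j + d) (by omega) this
        simpa [Nat.add_assoc] using this
    -- every gap start is ≤ i0 and holes fill [g, i0]
    have gstart : ∀ g : Fin n, g ∉ L →
        (g.val = 0 ∨ (⟨g.val - 1, lt_of_le_of_lt (Nat.sub_le _ _) g.isLt⟩ : Fin n) ∈ L) →
        g.val ≤ i0 := by
      intro g hgL hg0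
      by_contra hc
      push_neg at hc
      have hHg : H g.val := ⟨g.isLt, by simpa using hgL⟩
      rcases Nat.lt_or_ge (i0 + 1) g.val with hgt | hle
      · -- g.val > i0 + 1
        have hM : M (g.val - 1) := by
          rcases hg0 with h0 | hmem
          · omega
          · exact ⟨lt_of_le_of_lt (Nat.sub_le _ _) g.isLt, hmem⟩
        exact hA g.val hgt g.isLt hHg hM
      · -- g.val = i0 + 1
        have : g.val = i0 + 1 := by omega
        rcases hg0 with h0 | hmem
        · omega
        · apply hiL
          have : (⟨g.val - 1, lt_of_le_of_lt (Nat.sub_le _ _) g.isLt⟩ : Fin n) = i := by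
            apply Fin.ext
            simp [this, hi0]
          rwa [this] at hmem
    -- two distinct gap starts
    have h2 := Finset.one_lt_card.mp (lt_of_lt_of_le one_lt_two hgaps)
    obtain ⟨g1, hg1, g2, hg2, hne⟩ := h2
    simp only [Finset.mem_filter, Finset.mem_univ, true_and] at hg1 hg2
    obtain ⟨hg1L, hg1s⟩ := hg1
    obtain ⟨hg2L, hg2s⟩ := hg2
    have hle1 := gstart g1 hg1L hg1s
    have hle2 := gstart g2 hg2L hg2s
    -- wlog g1.val < g2.val
    have key : ∀ a b : Fin n, a ∉ L →
        (b.val = 0 ∨ (⟨b.val - 1, lt_of_le_of_lt (Nat.sub_le _ _) b.isLt⟩ : Fin n) ∈ L) →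
        a.val < b.val → b.val ≤ i0 → False := by
      intro a b haL hbs hab hbi
      have hHa : H a.val := ⟨a.isLt, by simpa using haL⟩
      have hHb1 : H (b.val - 1) := by
        have := prop (b.val - 1 - a.val) a.val (by omega) hHa
        have heq : a.val + (b.val - 1 - a.val) = b.val - 1 := by omega
        rwa [heq] at this
      rcases hbs with h0 | hmem
      · omega
      · exact hMH (b.val - 1) ⟨_, hmem⟩ hHb1
    rcases lt_trichotomy g1.val g2.val with h | h | h
    · exact key g1 g2 hg1L hg2s h hle2
    · exact hne (Fin.ext h)
    · exact key g2 g1 hg2L hg1s h hle1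
  have hk1 : 1 ≤ k := by omega
  rcases dich with ⟨g, hg1, hg2, hg3, hg4⟩ | ⟨w0, hw1, hw2, hw3⟩
  · -- case A: a gap start v above i0+1
    set PA : ℕ → Prop := fun g' => i0 + 1 < g' ∧ g' < n ∧ H g' ∧ M (g' - 1) with hPA
    have hexA : ∃ g', PA g' := ⟨g, hg1, hg2, hg3, hg4⟩
    set v := Nat.find hexA with hv
    have hvspec : PA v := Nat.find_spec hexA
    have hvmin : ∀ m, m < v → ¬ PA m := fun m hm => Nat.find_min hexA hm
    obtain ⟨hv1, hv2, hv3, hv4⟩ := hvspec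
    obtain ⟨hvn, hvL⟩ := hv3
    have hv3' : H v := ⟨hvn, hvL⟩
    -- holes in (i0+1, v) propagate downward
    have claimC : ∀ j, i0 + 1 < j → j < v → H j → H (j - 1) := by
      intro j hj1 hj2 hHj
      have hj1n : j - 1 < n := by omega
      refine ⟨hj1n, ?_⟩
      by_contra hc
      exact hvmin j hj2 ⟨hj1, by omega, hHj, ⟨hj1n, hc⟩⟩
    -- b : greatest hole below v
    set b := Nat.findGreatest H (v - 1) with hb
    have hble : i0 + 1 ≤ b := Nat.le_findGreatest (by omega) hHi1
    have hHb : H b := by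
      rcases Nat.eq_zero_or_pos b with h0 | hpos
      · omega
      · exact Nat.findGreatest_of_ne_zero rfl (by omega)
    have hbv1 : b ≤ v - 1 := Nat.findGreatest_le _
    have hbgr : ∀ m, b < m → m ≤ v - 1 → ¬ H m :=
      fun m hm1 hm2 => Nat.findGreatest_is_greatest hm1 hm2
    have hbne : b ≠ v - 1 := by
      intro hc
      exact hMH (v - 1) hv4 (hc ▸ hHb)
    have hbv2 : b + 2 ≤ v := by omega
    have hHb1 : H (b - 1) := by
      rcases Nat.lt_or_ge (i0 + 1) b with hgt | hle
      · exact claimC b hgt (by omega) hHb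
      · have : b = i0 + 1 := by omega
        rw [this]
        simpa using hHi0
    -- landmarks fill (b, v)
    have hland : ∀ j, b < j → j < v → (∃ hj : j < n, (⟨j, hj⟩ : Fin n) ∈ L) := by
      intro j hj1 hj2
      have hjn : j < n := by omega
      exact ⟨hjn, hHM j hjn (hbgr j hj1 (by omega))⟩
    -- choose u with the right parity and τ the midpoint
    by_cases hpar : (v - b) % 2 = 0
    · set τ := (b + v) / 2 with hτ
      obtain ⟨hτn, hτL⟩ := hland τ (by omega) (by omega)
      obtain ⟨hbn, hbL⟩ := hHb
      exact aux_kill L hcard hk1 b v τ hbn hvn hτn (by omega) hbL hvL hτL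
        (by simp [Nat.dist]; omega)
    · set τ := (b - 1 + v) / 2 with hτ
      obtain ⟨hτn, hτL⟩ := hland τ (by omega) (by omega)
      obtain ⟨hbn, hbL⟩ := hHb1
      exact aux_kill L hcard hk1 (b - 1) v τ hbn hvn hτn (by omega) hbL hvL hτL
        (by simp [Nat.dist]; omega)
  · -- case B: a gap end w below i0
    set PB : ℕ → Prop := fun j => j < i0 ∧ H j ∧ M (j + 1) with hPB
    set w := Nat.findGreatest PB i0 with hw
    have hwge : w0 ≤ w := Nat.le_findGreatest (by omega) ⟨hw1, hw2, hw3⟩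
    have hwspec : PB w := by
      rcases Nat.eq_zero_or_pos w with h0 | hpos
      · have : w0 = 0 := by omega
        rw [h0, ← this]; exact ⟨hw1, hw2, hw3⟩
      · exact Nat.findGreatest_of_ne_zero rfl (by omega)
    have hwgr : ∀ m, w < m → m ≤ i0 → ¬ PB m :=
      fun m hm1 hm2 => Nat.findGreatest_is_greatest hm1 hm2
    obtain ⟨hww1, hww2, hww3⟩ := hwspec
    -- a : least hole above w
    have hexa : ∃ j, w < j ∧ H j := ⟨i0, hww1, hHi0⟩
    set a := Nat.find hexa with ha
    have haspec : w < a ∧ H a := Nat.find_spec hexa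
    have hamin : ∀ m, m < a → ¬ (w < m ∧ H m) := fun m hm => Nat.find_min hexa hm
    have hai0 : a ≤ i0 := Nat.find_min' hexa ⟨hww1, hHi0⟩
    obtain ⟨haw, hHa⟩ := haspec
    have haw2 : w + 2 ≤ a := by
      rcases Nat.lt_or_ge (w + 1) a with h | h
      · omega
      · have : a = w + 1 := by omega
        exact absurd (this ▸ hHa) (hMH _ hww3)
    -- holes at a and a+1
    have hHa1 : H (a + 1) := by
      rcases Nat.lt_or_ge a i0 with hlt | hge
      · have := hwgr a (by omega) (by omega)
        simp only [hPB] at this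
        push_neg at this
        have hMa1 := this hlt hHa
        have h1n : a + 1 < n := by omega
        refine ⟨h1n, ?_⟩
        by_contra hc
        exact hMa1 ⟨h1n, hc⟩
      · have : a = i0 := by omega
        rw [this]; exact hHi1
    -- landmarks fill (w, a)
    have hland : ∀ j, w < j → j < a → (∃ hj : j < n, (⟨j, hj⟩ : Fin n) ∈ L) := by
      intro j hj1 hj2
      have hjn : j < n := by omega
      refine ⟨hjn, hHM j hjn ?_⟩
      intro hHj
      exact hamin j hj2 ⟨hj1, hHj⟩
    obtain ⟨hwn, hwL⟩ := hww2
    by_cases hpar : (a - w) % 2 = 0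
    · set τ := (w + a) / 2 with hτ
      obtain ⟨hτn, hτL⟩ := hland τ (by omega) (by omega)
      obtain ⟨han, haL⟩ := hHa
      exact aux_kill L hcard hk1 w a τ hwn han hτn (by omega) hwL haL hτL
        (by simp [Nat.dist]; omega)
    · set τ := (w + a + 1) / 2 with hτ
      obtain ⟨hτn, hτL⟩ := hland τ (by omega) (by omega)
      obtain ⟨han, haL⟩ := hHa1
      exact aux_kill L hcard hk1 w (a + 1) τ hwn han hτn (by omega) hwL haL hτL
        (by simp [Nat.dist]; omega)
end

section
/- Let P_n be the path graph on n vertices, k ≥ 2, and let L be an NL k-landmark set of P_n with |L| = k. If L induces at least two gaps, then every anti-gap that contains neither v_1 nor v_n has even length. -/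
section Aux
open SimpleGraph

lemma pathGraph_walk_lb {n : ℕ} : ∀ {u v : Fin n} (p : (pathGraph n).Walk u v),
    (u.val - v.val) + (v.val - u.val) ≤ p.length := by
  intro u v p
  induction p with
  | nil => simp
  | cons h p ih =>
    rw [pathGraph_adj] at h
    rw [SimpleGraph.Walk.length_cons]
    omega

lemma pathGraph_walk_ub {n : ℕ} : ∀ (d : ℕ) (u v : Fin n), u.val + d = v.val →
    ∃ p : (pathGraph n).Walk u v, p.length = d := by
  intro d
  induction d with
  | zero =>
    intro u v h
    have : u = v := Fin.ext (by omega)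
    subst this
    exact ⟨SimpleGraph.Walk.nil, rfl⟩
  | succ d ih =>
    intro u v h
    have hlt : u.val + 1 < n := by have := v.isLt; omega
    set w : Fin n := ⟨u.val + 1, hlt⟩ with hw
    have hadj : (pathGraph n).Adj u w := by rw [pathGraph_adj]; left; rfl
    obtain ⟨p, hp⟩ := ih w v (by simp [hw]; omega)
    exact ⟨SimpleGraph.Walk.cons hadj p, by simp [hp]⟩

lemma pathGraph_dist {n : ℕ} (u v : Fin n) :
    (pathGraph n).dist u v = (u.val - v.val) + (v.val - u.val) := by
  rcases le_total u.val v.val with h | h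
  · obtain ⟨p, hp⟩ := pathGraph_walk_ub (v.val - u.val) u v (by omega)
    have h1 := SimpleGraph.dist_le p
    have hr : (pathGraph n).Reachable u v := ⟨p⟩
    obtain ⟨q, hq⟩ := hr.exists_walk_length_eq_dist
    have h2 := pathGraph_walk_lb q
    omega
  · obtain ⟨p, hp⟩ := pathGraph_walk_ub (u.val - v.val) v u (by omega)
    have h1 := SimpleGraph.dist_le p
    have hr : (pathGraph n).Reachable u v := ⟨p.reverse⟩
    obtain ⟨q, hq⟩ := hr.exists_walk_length_eq_dist
    have h2 := pathGraph_walk_lb q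
    have hc : (pathGraph n).dist u v = (pathGraph n).dist v u := SimpleGraph.dist_comm ..
    omega

end Aux

/-- For the path graph on `n` vertices (indexed `0, …, n-1`) and `k ≥ 2`: if `L` is an NL
`k`-landmark set with `|L| = k` inducing at least two gaps, then every anti-gap (maximal
run `s, …, t` of vertices of `L`) that contains neither the first vertex nor the last
vertex of the path has even length. -/

theorem stmt_7 (n k : ℕ) (hk : 2 ≤ k)
    (L : Finset (Fin n)) (hcard : L.card = k)
    (hL : isNLLandmark (SimpleGraph.pathGraph n) k L)
    (hgaps : 2 ≤ numGaps L)
    (s t : ℕ) (hst : s ≤ t) (htn : t < n)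
    (hall : ∀ m : ℕ, (h1 : s ≤ m) → (h2 : m ≤ t) → (⟨m, by omega⟩ : Fin n) ∈ L)
    (hs0 : 0 < s) (hsL : (⟨s - 1, by omega⟩ : Fin n) ∉ L)
    (ht0 : t < n - 1) (htL : (⟨t + 1, by omega⟩ : Fin n) ∉ L) :
    Even (t - s + 1) := by
  by_contra hodd
  obtain ⟨q, hq⟩ : ∃ q, t - s = 2 * q := by
    rcases Nat.even_or_odd (t - s) with ⟨q, hq⟩ | ⟨q, hq⟩
    · exact ⟨q, by omega⟩
    · exact absurd ⟨q + 1, by omega⟩ hodd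
  have ha : s - 1 < n := by omega
  have hb : t + 1 < n := by omega
  have hc : s + q < n := by omega
  have hm : (⟨s + q, hc⟩ : Fin n) ∈ L := hall (s + q) (Nat.le_add_right _ _) (by omega)
  have hne : (⟨s - 1, ha⟩ : Fin n) ≠ ⟨t + 1, hb⟩ :=
    Fin.ne_of_val_ne (by simp only [Fin.val_mk]; omega)
  have hk' := hL _ _ hne hsL htL
  have d1 := pathGraph_dist (⟨s - 1, ha⟩ : Fin n) ⟨s + q, hc⟩
  have d2 := pathGraph_dist (⟨t + 1, hb⟩ : Fin n) ⟨s + q, hc⟩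
  simp only [Fin.val_mk] at d1 d2
  have hMeq : (SimpleGraph.pathGraph n).dist ⟨s - 1, ha⟩ (⟨s + q, hc⟩ : Fin n) =
      (SimpleGraph.pathGraph n).dist ⟨t + 1, hb⟩ ⟨s + q, hc⟩ := by omega
  have hsub : (L.filter fun τ => (SimpleGraph.pathGraph n).dist ⟨s - 1, ha⟩ τ ≠
      (SimpleGraph.pathGraph n).dist ⟨t + 1, hb⟩ τ) ⊆
      L.erase ⟨s + q, hc⟩ := by
    intro x hx
    rw [Finset.mem_filter] at hx
    rw [Finset.mem_erase]
    refine ⟨?_, hx.1⟩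
    rintro rfl
    exact hx.2 hMeq
  have hfin : k ≤ (L.erase ⟨s + q, hc⟩).card :=
    le_trans hk' (Finset.card_le_card hsub)
  rw [Finset.card_erase_of_mem hm, hcard] at hfin
  omega
end

section
/- Let W be the complete wheel graph on n ≥ 8 vertices. A set L ⊆ C is an AP 2-landmark set of W if and only if it satisfies: for every i, if c_i ∉ L and c_{i+1} ∉ L, then c_{i−3}, c_{i−2}, c_{i−1}, c_{i+2}, c_{i+3}, c_{i+4} ∈ L (indices modulo n−1). Moreover md_2^AP(W) = ⌊n/2⌋. -/
/-- The complete wheel graph with cycle `c_1, …, c_m` (encoded as `some i` for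
`i : ZMod m`) and central vertex `h` (encoded as `none`); a wheel on `n` vertices has
`m = n - 1`. -/
def wheelGraph (m : ℕ) : SimpleGraph (Option (ZMod m)) :=
  SimpleGraph.fromRel fun u v => u = none ∨ ∃ i : ZMod m, u = some i ∧ v = some (i + 1)

/-- The AP `k = 2` condition on a set of vertices of the wheel: whenever two consecutive
cycle vertices `c_i, c_{i+1}` are not in `L`, the three cycle vertices preceding them and
the three cycle vertices following them are in `L`. -/
def apCond2 (m : ℕ) (L : Finset (Option (ZMod m))) : Prop :=
  ∀ i : ZMod m, some i ∉ L → some (i + 1) ∉ L →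
    some (i - 3) ∈ L ∧ some (i - 2) ∈ L ∧ some (i - 1) ∈ L ∧
    some (i + 2) ∈ L ∧ some (i + 3) ∈ L ∧ some (i + 4) ∈ L

/-! In the wheel every distance is at most `2` (through the hub), so a cycle vertex separates
two cycle vertices `c_a, c_b` only if it is adjacent or equal to one of them. For `b = a + 1`
and `b = a + 2` the separators in `L` are exactly the elements of `L` among
`c_{a-1}, c_a, c_b, c_{b+1}`.
Demanding two of them for the four pairs around a gap `c_i, c_{i+1} ∉ L` yields the six
memberships of the condition. Conversely, under the condition every such window meets `L` twice;
far pairs are separated by a vertex of `L` next to each of them; and the hub is separated from `c_a`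
by every vertex of `L` except `c_{a ± 1}`, of which there are enough because sending each missing
`c_j` to a neighbour in `L` is injective, so that `L` contains at least half of the cycle. The even
vertices show that half is attained. -/

open Finset

lemma ZMod.natCast_ne_zero_of_lt {m k : ℕ} (h0 : 0 < k) (hk : k < m) : (k : ZMod m) ≠ 0 := by
  rw [Ne, ZMod.natCast_eq_zero_iff]
  exact Nat.not_dvd_of_pos_of_lt h0 hk

lemma ZMod.one_two_three_four_ne_zero {m : ℕ} (hm : 5 ≤ m) :
    (1 : ZMod m) ≠ 0 ∧ (2 : ZMod m) ≠ 0 ∧ (3 : ZMod m) ≠ 0 ∧ (4 : ZMod m) ≠ 0 := by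
  refine ⟨?_, ?_, ?_, ?_⟩
  · exact_mod_cast ZMod.natCast_ne_zero_of_lt (k := 1) (by norm_num) (by omega)
  · exact_mod_cast ZMod.natCast_ne_zero_of_lt (k := 2) (by norm_num) (by omega)
  · exact_mod_cast ZMod.natCast_ne_zero_of_lt (k := 3) (by norm_num) (by omega)
  · exact_mod_cast ZMod.natCast_ne_zero_of_lt (k := 4) (by norm_num) (by omega)

lemma Finset.mem_of_two_le_card_inter_union {α : Type*} [DecidableEq α] {L s : Finset α}
    {p q : α} (h : 2 ≤ #(L ∩ (s ∪ {p, q}))) (hs : Disjoint L s) : p ∈ L ∧ q ∈ L := by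
  rw [inter_union_distrib_left, disjoint_iff_inter_eq_empty.mp hs, empty_union] at h
  have hsub : {p, q} ⊆ L ∩ {p, q} :=
    (eq_of_subset_of_card_le inter_subset_right (card_le_two.trans h)).symm.subset
  exact ⟨(mem_inter.mp (hsub (by simp))).1, (mem_inter.mp (hsub (by simp))).1⟩

lemma Finset.two_le_card_inter_union {α : Type*} [DecidableEq α] {L s t : Finset α}
    (hst : Disjoint s t) (hs : #s = 2) (ht : #t = 2)
    (hst_mem : L ∩ s = ∅ → t ⊆ L) (hts_mem : L ∩ t = ∅ → s ⊆ L) :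
    2 ≤ #(L ∩ (s ∪ t)) := by
  rw [inter_union_distrib_left,
    card_union_of_disjoint (hst.mono inter_subset_right inter_subset_right)]
  by_cases hLs : L ∩ s = ∅
  · rw [inter_eq_right.mpr (hst_mem hLs)]; omega
  by_cases hLt : L ∩ t = ∅
  · rw [inter_eq_right.mpr (hts_mem hLt)]; omega
  have := card_pos.mpr (nonempty_iff_ne_empty.mpr hLs)
  have := card_pos.mpr (nonempty_iff_ne_empty.mpr hLt)
  omega

namespace SimpleGraph

variable {V : Type*} (G : SimpleGraph V)

noncomputable def separators (L : Finset V) (u v : V) : Finset V :=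
  L.filter fun τ => G.dist u τ ≠ G.dist v τ

variable {G} {L : Finset V} {u v : V}

lemma separators_comm : G.separators L u v = G.separators L v u :=
  filter_congr fun _ _ => ne_comm

lemma two_le_card_separators {x y : V} (hx : x ∈ L) (hy : y ∈ L) (hxy : x ≠ y)
    (hsx : G.dist u x ≠ G.dist v x) (hsy : G.dist u y ≠ G.dist v y) :
    2 ≤ #(G.separators L u v) :=
  one_lt_card.mpr ⟨x, mem_filter.mpr ⟨hx, hsx⟩, y, mem_filter.mpr ⟨hy, hsy⟩, hxy⟩

end SimpleGraph

namespace wheelGraph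

open SimpleGraph

variable {m : ℕ}

lemma adj_none_some (a : ZMod m) : (wheelGraph m).Adj none (some a) := by
  simp [wheelGraph]

lemma adj_some_some_iff {a b : ZMod m} :
    (wheelGraph m).Adj (some a) (some b) ↔ a ≠ b ∧ (b - a = 1 ∨ a - b = 1) := by
  simp only [wheelGraph, fromRel_adj, ne_eq, Option.some.injEq, reduceCtorEq, false_or,
    exists_eq_left']
  grind

lemma adj_some_none (a : ZMod m) : (wheelGraph m).Adj (some a) none :=
  (adj_none_some a).symm

lemma dist_none_some (a : ZMod m) : (wheelGraph m).dist none (some a) = 1 :=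
  dist_eq_one_iff_adj.mpr (adj_none_some a)

lemma dist_some_none (a : ZMod m) : (wheelGraph m).dist (some a) none = 1 :=
  dist_eq_one_iff_adj.mpr (adj_some_none a)

lemma dist_some_some (a b : ZMod m) : (wheelGraph m).dist (some a) (some b) =
    if a = b then 0 else if b - a = 1 ∨ a - b = 1 then 1 else 2 := by
  split_ifs with hab hadj
  · rw [hab, dist_self]
  · exact dist_eq_one_iff_adj.mpr (adj_some_some_iff.mpr ⟨hab, hadj⟩)
  · have hwalk : (wheelGraph m).dist (some a) (some b) ≤ 2 :=
      dist_le ((adj_some_none a).toWalk.append (adj_none_some b).toWalk)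
    have hreach : (wheelGraph m).Reachable (some a) (some b) :=
      (adj_some_none a).reachable.trans (adj_none_some b).reachable
    have h0 : (wheelGraph m).dist (some a) (some b) ≠ 0 := by
      simpa [hreach.dist_eq_zero_iff] using hab
    have h1 : (wheelGraph m).dist (some a) (some b) ≠ 1 := by
      rw [Ne, dist_eq_one_iff_adj, adj_some_some_iff]
      tauto
    omega

variable {L : Finset (Option (ZMod m))}

lemma separators_some_some_of_close (hm : 5 ≤ m) {a b : ZMod m} (hab : b - a = 1 ∨ b - a = 2) :
    (wheelGraph m).separators L (some a) (some b) =
      L ∩ ({some (a - 1), some a} ∪ {some b, some (b + 1)}) := by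
  obtain ⟨h1, h2, h3, h4⟩ := ZMod.one_two_three_four_ne_zero hm
  ext (_ | c)
  · simp [separators, dist_some_none]
  · simp only [separators, mem_filter, mem_inter, mem_union, mem_insert, mem_singleton,
      Option.some.injEq, dist_some_some]
    refine and_congr_right fun _ => ?_
    split_ifs <;> grind

lemma apCond2_of_isAPLandmark (hm : 5 ≤ m) (hL : isAPLandmark (wheelGraph m) 2 L) :
    apCond2 m L := by
  obtain ⟨h1, h2, -, -⟩ := ZMod.one_two_three_four_ne_zero hm
  intro i hi hi1
  have hout : Disjoint L {some i, some (i + 1)} := by simp [hi, hi1]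
  have hwindow : ∀ a b : ZMod m, b - a = 1 ∨ b - a = 2 →
      2 ≤ #(L ∩ ({some (a - 1), some a} ∪ {some b, some (b + 1)})) := fun a b hab => by
    rw [← separators_some_some_of_close hm hab]
    exact hL _ _ (by simp only [ne_eq, Option.some.injEq]; grind)
  have hleft : ∀ a, i - a = 1 ∨ i - a = 2 → some (a - 1) ∈ L ∧ some a ∈ L := fun a ha =>
    Finset.mem_of_two_le_card_inter_union (by rw [union_comm]; exact hwindow a i ha) hout
  have hright :
      ∀ b, b - (i + 1) = 1 ∨ b - (i + 1) = 2 → some b ∈ L ∧ some (b + 1) ∈ L :=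
    fun b hb => Finset.mem_of_two_le_card_inter_union (by simpa using hwindow (i + 1) b hb) hout
  obtain ⟨hsub3, hsub2⟩ := hleft (i - 2) (.inr (by ring))
  obtain ⟨-, hsub1⟩ := hleft (i - 1) (.inl (by ring))
  obtain ⟨hadd2, hadd3⟩ := hright (i + 2) (.inl (by ring))
  obtain ⟨-, hadd4⟩ := hright (i + 3) (.inr (by ring))
  rw [show i - 2 - 1 = i - 3 by ring] at hsub3
  rw [show i + 2 + 1 = i + 3 by ring] at hadd3
  rw [show i + 3 + 1 = i + 4 by ring] at hadd4
  exact ⟨hsub3, hsub2, hsub1, hadd2, hadd3, hadd4⟩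

end wheelGraph

namespace apCond2

open SimpleGraph wheelGraph

variable {m : ℕ} {L : Finset (Option (ZMod m))}

lemma two_le_card_separators_some_some_of_close (hm : 5 ≤ m) (hC : apCond2 m L)
    {a b : ZMod m} (hab : b - a = 1 ∨ b - a = 2) :
    2 ≤ #((wheelGraph m).separators L (some a) (some b)) := by
  obtain ⟨h1, h2, h3, h4⟩ := ZMod.one_two_three_four_ne_zero hm
  rw [separators_some_some_of_close hm hab]
  apply Finset.two_le_card_inter_union
  · simp only [disjoint_insert_left, disjoint_insert_right, disjoint_singleton_left, mem_insert,
      mem_singleton, Option.some.injEq]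
    grind
  · rw [card_pair (by simp [h1])]
  · rw [card_pair (by simp [h1])]
  · intro h
    simp only [eq_empty_iff_forall_notMem, mem_inter, mem_insert, mem_singleton] at h
    obtain ⟨-, -, -, h5, h6, h7⟩ := hC (a - 1) (fun hx => h _ ⟨hx, .inl rfl⟩)
      (by rw [sub_add_cancel]; exact fun hx => h _ ⟨hx, .inr rfl⟩)
    rw [insert_subset_iff, singleton_subset_iff]
    grind
  · intro h
    simp only [eq_empty_iff_forall_notMem, mem_inter, mem_insert, mem_singleton] at h
    obtain ⟨h5, h6, h7, -, -, -⟩ := hC b (fun hx => h _ ⟨hx, .inl rfl⟩)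
      (fun hx => h _ ⟨hx, .inr rfl⟩)
    rw [insert_subset_iff, singleton_subset_iff]
    grind

lemma exists_mem_near (hC : apCond2 m L) (a : ZMod m) :
    ∃ c, some c ∈ L ∧ (c = a ∨ c - a = 1 ∨ a - c = 1) := by
  by_cases ha : some a ∈ L
  · exact ⟨a, ha, .inl rfl⟩
  by_cases ha1 : some (a + 1) ∈ L
  · exact ⟨a + 1, ha1, .inr (.inl (by ring))⟩
  exact ⟨a - 1, (hC a ha ha1).2.2.1, .inr (.inr (by ring))⟩

lemma two_le_card_separators_some_some_of_far (hC : apCond2 m L) {a b : ZMod m} (hab : a ≠ b)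
    (h1 : b - a ≠ 1) (h1' : a - b ≠ 1) (h2 : b - a ≠ 2) (h2' : a - b ≠ 2) :
    2 ≤ #((wheelGraph m).separators L (some a) (some b)) := by
  obtain ⟨x, hx, hxa⟩ := exists_mem_near hC a
  obtain ⟨y, hy, hyb⟩ := exists_mem_near hC b
  refine two_le_card_separators hx hy (by simp only [ne_eq, Option.some.injEq]; grind) ?_ ?_ <;>
    simp only [dist_some_some] <;> split_ifs <;> grind

lemma le_two_mul_card_eraseNone [NeZero m] (hC : apCond2 m L) :
    m ≤ 2 * #(eraseNone L) := by
  set S := eraseNone L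
  let f : ZMod m → ZMod m := fun j => if j + 1 ∈ S then j + 1 else j - 1
  have hout : ∀ {j}, j ∈ (↑(univ \ S) : Set (ZMod m)) ↔ some j ∉ L := by simp [S]
  have hmaps : Set.MapsTo f ↑(univ \ S) ↑S := by
    intro j hj
    simp only [f, mem_coe]
    split_ifs with h1
    · exact h1
    · exact mem_eraseNone.mpr (hC j (hout.mp hj) (mt mem_eraseNone.mpr h1)).2.2.1
  have hinj : Set.InjOn f ↑(univ \ S) := by
    intro j hj j' hj' h
    simp only [f] at h
    split_ifs at h with h1 h2 h2
    · exact add_right_cancel h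
    · have := (hC j' (hout.mp hj') (mt mem_eraseNone.mpr h2)).2.1
      exact absurd (show some j ∈ L by grind) (hout.mp hj)
    · have := (hC j (hout.mp hj) (mt mem_eraseNone.mpr h1)).2.1
      exact absurd (show some j' ∈ L by grind) (hout.mp hj')
    · exact sub_left_injective h
  have hle := card_le_card_of_injOn f hmaps hinj
  rw [card_univ_sdiff, ZMod.card] at hle
  have := card_le_univ S
  rw [ZMod.card] at this
  omega

lemma two_le_card_separators_none_some (hm : 7 ≤ m) (hC : apCond2 m L) (a : ZMod m) :
    2 ≤ #((wheelGraph m).separators L none (some a)) := by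
  have : NeZero m := ⟨by omega⟩
  calc 2 ≤ #(eraseNone L \ {a - 1, a + 1}) := by
        have := le_two_mul_card_eraseNone hC
        have := le_card_sdiff {a - 1, a + 1} (eraseNone L)
        have := card_le_two (a := a - 1) (b := a + 1)
        omega
    _ ≤ #((wheelGraph m).separators L none (some a)) := by
        refine card_le_card_of_injOn some (fun c hc => ?_) (Option.some_injective _).injOn
        simp only [coe_sdiff, Set.mem_sdiff, mem_coe, mem_eraseNone, coe_insert, coe_singleton,
          Set.mem_insert_iff, Set.mem_singleton_iff] at hc
        simp only [separators, coe_filter, Set.mem_ofPred_eq, dist_none_some, dist_some_some]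
        refine ⟨hc.1, ?_⟩
        split_ifs <;> grind

end apCond2

namespace wheelGraph

open SimpleGraph

variable {m : ℕ} {L : Finset (Option (ZMod m))}

lemma isAPLandmark_of_apCond2 (hm : 7 ≤ m) (hC : apCond2 m L) :
    isAPLandmark (wheelGraph m) 2 L := by
  refine fun u v huv => (?_ : 2 ≤ #((wheelGraph m).separators L u v))
  rcases u with _ | a <;> rcases v with _ | b
  · exact absurd rfl huv
  · exact apCond2.two_le_card_separators_none_some hm hC b
  · rw [separators_comm]
    exact apCond2.two_le_card_separators_none_some hm hC a
  · have hab : a ≠ b := by simpa using huv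
    by_cases h : b - a = 1 ∨ b - a = 2
    · exact apCond2.two_le_card_separators_some_some_of_close (by omega) hC h
    by_cases h' : a - b = 1 ∨ a - b = 2
    · rw [separators_comm]
      exact apCond2.two_le_card_separators_some_some_of_close (by omega) hC h'
    push Not at h h'
    exact apCond2.two_le_card_separators_some_some_of_far hC hab h.1 h'.1 h.2 h'.2

def evenVertices (m : ℕ) : Finset (Option (ZMod m)) :=
  (range ((m + 1) / 2)).image fun k => some ((2 * k : ℕ) : ZMod m)

lemma card_evenVertices : #(evenVertices m) = (m + 1) / 2 := by
  rw [evenVertices, card_image_of_injOn, card_range]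
  intro k hk l hl h
  simp only [coe_range, Set.mem_Iio, Option.some.injEq, ZMod.natCast_eq_natCast_iff'] at hk hl h
  rw [Nat.mod_eq_of_lt (by omega), Nat.mod_eq_of_lt (by omega)] at h
  omega

lemma apCond2_evenVertices [NeZero m] : apCond2 m (evenVertices m) := by
  intro i hi hi1
  exfalso
  simp only [evenVertices, mem_image, mem_range, Option.some.injEq, not_exists, not_and] at hi hi1
  have hv := ZMod.val_lt i
  obtain ⟨k, hk⟩ | ⟨k, hk⟩ := Nat.even_or_odd i.val
  · exact hi k (by omega) (by rw [← ZMod.natCast_zmod_val i, hk]; push_cast; ring)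
  by_cases hlt : k + 1 < (m + 1) / 2
  · exact hi1 (k + 1) hlt (by rw [← ZMod.natCast_zmod_val i, hk]; push_cast; ring)
  -- otherwise `i` is the last vertex `m - 1`, followed by the even vertex `0`
  refine hi1 0 (by omega) ?_
  rw [← ZMod.natCast_zmod_val i, Nat.mul_zero, Nat.cast_zero, ← Nat.cast_add_one,
    show i.val + 1 = m by omega, ZMod.natCast_self]

end wheelGraph

/-- For the complete wheel graph on `n ≥ 8` vertices: a set `L ⊆ C` of cycle vertices is
an AP `2`-landmark set if and only if it satisfies the AP `k = 2` condition; moreover the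
minimum cardinality of an AP `2`-landmark set is `⌊n/2⌋`. -/
theorem stmt_15 (n : ℕ) (hn : 8 ≤ n) :
    (∀ L : Finset (Option (ZMod (n - 1))), none ∉ L →
      (isAPLandmark (wheelGraph (n - 1)) 2 L ↔ apCond2 (n - 1) L)) ∧
    IsLeast {m | ∃ L : Finset (Option (ZMod (n - 1))),
      isAPLandmark (wheelGraph (n - 1)) 2 L ∧ L.card = m} (n / 2) := by
  have hm : 7 ≤ n - 1 := by omega
  have : NeZero (n - 1) := ⟨by omega⟩
  refine ⟨fun L _ => ⟨wheelGraph.apCond2_of_isAPLandmark (by omega),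
    wheelGraph.isAPLandmark_of_apCond2 hm⟩, ?_, ?_⟩
  · refine ⟨wheelGraph.evenVertices (n - 1),
      wheelGraph.isAPLandmark_of_apCond2 hm wheelGraph.apCond2_evenVertices, ?_⟩
    rw [wheelGraph.card_evenVertices]
    congr 1
    omega
  · rintro k ⟨L, hL, rfl⟩
    have := apCond2.le_two_mul_card_eraseNone
      (wheelGraph.apCond2_of_isAPLandmark (by omega) hL)
    have := card_eraseNone_le L
    omega
end
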